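/- arXiv:1907.06579 — 5 statements merged into one kernel-verified Lean document; each statement's English description precedes it below -/
import Mathlib

section
/- There is a bijection between the set BRP^0_n and the set of pairs (κ, f), where κ ∈ RP^0_n is a 2-restricted partition of length exactly n and f : {1,…,n} → {+,−} satisfies f(i) = f(j) whenever κ_i = κ_j; the bijection sends (μ, ν) to (μ∗ν, f) with f(i) = + iff (μ∗ν)_i appears as a part of μ. -/
/-- The list of parts of a multiset of naturals, sorted in weakly decreasing order. -/
def descParts (m : Multiset ℕ) : List ℕ := (m.sort (· ≤ ·)).reverse

/-- The `i`-th part (0-indexed) of a multiset of naturals, read in decreasing order,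
with the convention that parts beyond the length are `0`. -/
def partAt (m : Multiset ℕ) (i : ℕ) : ℕ := (descParts m).getD i 0

/-- `m` is a 2-restricted partition of length exactly `n`: it has exactly `n` parts, all
positive, and consecutive parts (padded by zero) differ by at most `1`. -/
def IsRP0 (n : ℕ) (m : Multiset ℕ) : Prop :=
  Multiset.card m = n ∧ (∀ a ∈ m, 0 < a) ∧ ∀ i, partAt m i ≤ partAt m (i + 1) + 1

/-!
Since `μ` and `ν` share no part, `μ` is recovered from `κ = μ + ν` as the parts of `κ` whose
sign is `+`, and `ν` as the rest. Conversely, a sign function constant on equal parts of `κ`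
splits `κ` in this way into two multisets with no common part, whose signs are the given ones.
-/

theorem Multiset.filter_mem_add_left {α : Type*} [DecidableEq α] {μ ν : Multiset α}
    (h : ∀ a ∈ μ, a ∉ ν) : (μ + ν).filter (· ∈ μ) = μ := by
  rw [Multiset.filter_add, Multiset.filter_eq_self.mpr fun _ => id,
    Multiset.filter_eq_nil.mpr fun a ha hμ => h a hμ ha, add_zero]

theorem length_descParts (m : Multiset ℕ) : (descParts m).length = Multiset.card m := by
  simp [descParts]

theorem mem_descParts {m : Multiset ℕ} {a : ℕ} : a ∈ descParts m ↔ a ∈ m := by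
  simp [descParts]

theorem partAt_mem {m : Multiset ℕ} {i : ℕ} (h : i < Multiset.card m) : partAt m i ∈ m := by
  rw [← mem_descParts, partAt, List.getD_eq_getElem _ _ (by rwa [length_descParts])]
  exact List.getElem_mem _

theorem exists_partAt_eq {m : Multiset ℕ} {a : ℕ} (h : a ∈ m) :
    ∃ i < Multiset.card m, partAt m i = a := by
  obtain ⟨i, hi, rfl⟩ := List.mem_iff_getElem.mp (mem_descParts.mpr h)
  exact ⟨i, by rwa [length_descParts] at hi, List.getD_eq_getElem _ _ hi⟩

section Signs

variable {n : ℕ} {κ : Multiset ℕ}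

def plusParts (κ : Multiset ℕ) (f : Fin n → Bool) : Multiset ℕ :=
  κ.filter fun a => ∃ i : Fin n, partAt κ i = a ∧ f i = true

def minusParts (κ : Multiset ℕ) (f : Fin n → Bool) : Multiset ℕ :=
  κ.filter fun a => ¬∃ i : Fin n, partAt κ i = a ∧ f i = true

theorem plusParts_add_minusParts (κ : Multiset ℕ) (f : Fin n → Bool) :
    plusParts κ f + minusParts κ f = κ :=
  Multiset.filter_add_not _ κ

theorem notMem_minusParts_of_mem_plusParts {f : Fin n → Bool} {a : ℕ}
    (h : a ∈ plusParts κ f) : a ∉ minusParts κ f :=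
  fun h' => (Multiset.mem_filter.mp h').2 (Multiset.mem_filter.mp h).2

theorem plusParts_decide_mem (hκ : Multiset.card κ = n) (μ : Multiset ℕ) :
    plusParts κ (fun i : Fin n => decide (partAt κ i ∈ μ)) = κ.filter (· ∈ μ) := by
  refine Multiset.filter_congr fun a ha => ?_
  obtain ⟨i, hi, rfl⟩ := exists_partAt_eq ha
  constructor
  · rintro ⟨j, hj, hjμ⟩
    simpa [hj] using hjμ
  · exact fun hμ => ⟨⟨i, hκ ▸ hi⟩, rfl, decide_eq_true hμ⟩

theorem partAt_mem_plusParts_iff (hκ : Multiset.card κ = n) {f : Fin n → Bool}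
    (hf : ∀ i j : Fin n, partAt κ i = partAt κ j → f i = f j) (i : Fin n) :
    partAt κ i ∈ plusParts κ f ↔ f i = true := by
  rw [plusParts, Multiset.mem_filter]
  exact ⟨fun ⟨_, j, hj, hfj⟩ => hf i j hj.symm ▸ hfj,
    fun hfi => ⟨partAt_mem (hκ ▸ i.2), i, rfl, hfi⟩⟩

end Signs

/-- There is a bijection between `BRP⁰ₙ` — bipartitions `(μ, ν)` (multisets of positive
parts, sharing no common part) with `μ∗ν ∈ RP⁰ₙ` — and pairs `(κ, f)` with `κ ∈ RP⁰ₙ` and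
`f : {1,…,n} → {+,-}` constant on equal parts of `κ`; it sends `(μ, ν)` to `(μ∗ν, f)`
where `f i = +` iff the `i`-th part of `μ∗ν` is a part of `μ`. -/
theorem stmt2 (n : ℕ) :
    ∃ F : {p : Multiset ℕ × Multiset ℕ //
            IsRP0 n (p.1 + p.2) ∧ (∀ a ∈ p.1, 0 < a) ∧ (∀ a ∈ p.2, 0 < a) ∧
              ∀ a ∈ p.1, a ∉ p.2} →
          {q : Multiset ℕ × (Fin n → Bool) //
            IsRP0 n q.1 ∧ ∀ i j : Fin n, partAt q.1 i.1 = partAt q.1 j.1 → q.2 i = q.2 j},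
      Function.Bijective F ∧
        ∀ p, (F p).1.1 = p.1.1 + p.1.2 ∧
          ∀ i : Fin n, (F p).1.2 i = decide (partAt (p.1.1 + p.1.2) i.1 ∈ p.1.1) := by
  refine ⟨fun p => ⟨(p.1.1 + p.1.2, fun i => decide (partAt (p.1.1 + p.1.2) i.1 ∈ p.1.1)),
      p.2.1, fun i j h => by simp only [h]⟩, ⟨?_, ?_⟩, fun p => ⟨rfl, fun i => rfl⟩⟩
  · rintro ⟨⟨μ, ν⟩, hp, _, _, hd⟩ ⟨⟨μ', ν'⟩, _, _, _, hd'⟩ h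
    have hκ : μ + ν = μ' + ν' := congrArg (fun q => q.1.1) h
    have hsign : (fun i : Fin n => decide (partAt (μ + ν) i ∈ μ)) =
        fun i : Fin n => decide (partAt (μ' + ν') i ∈ μ') := congrArg (fun q => q.1.2) h
    have hμ : μ = μ' :=
      calc μ = plusParts (μ + ν) (fun i : Fin n => decide (partAt (μ + ν) i ∈ μ)) := by
            rw [plusParts_decide_mem hp.1, Multiset.filter_mem_add_left hd]
        _ = plusParts (μ' + ν') (fun i : Fin n => decide (partAt (μ' + ν') i ∈ μ')) :=
            congr(plusParts $hκ $hsign)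
        _ = μ' := by
            rw [plusParts_decide_mem (hκ ▸ hp.1), Multiset.filter_mem_add_left hd']
    subst hμ
    simp only [Subtype.mk.injEq, Prod.mk.injEq, true_and]
    exact add_left_cancel hκ
  · rintro ⟨⟨κ, f⟩, hκ, hf⟩
    have hsplit := plusParts_add_minusParts κ f
    refine ⟨⟨(plusParts κ f, minusParts κ f), by simpa only [hsplit] using hκ,
      fun a ha => hκ.2.1 a (Multiset.mem_of_mem_filter ha),
      fun a ha => hκ.2.1 a (Multiset.mem_of_mem_filter ha),
      fun a => notMem_minusParts_of_mem_plusParts⟩, ?_⟩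
    refine Subtype.ext (Prod.ext hsplit (funext fun i => ?_))
    simp only [hsplit, partAt_mem_plusParts_iff hκ.1 hf, Bool.decide_eq_true]
end

section
/- Let g be a finite-dimensional classical Lie superalgebra over ℂ. For every element H ∈ [g₁, g₁] ∩ z(g₀), the trace of ad_H acting on g₁ is zero. -/
/-!
The supertrace of `ad` vanishes on `[g₁, g₁]`: by the two odd Jacobi identities, `ad [u, v]`
on `g₁` and on `g₀` are, up to sign, sums of composites of the maps `x ↦ [x, w] : g₀ → g₁` and
`[w, ·] : g₁ → g₀` taken in opposite orders, and `tr (P ∘ Q) = tr (Q ∘ P)`. So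
for `H ∈ [g₁, g₁]` the trace of `ad_H` on `g₁` is its trace on `g₀`, which vanishes when `H`
is central.
-/

/-- The odd data of a complex Lie superalgebra `g = g₀ ⊕ g₁`, where the even part `g₀` is a
complex Lie algebra: the brackets `b01 : g₀ × g₁ → g₁` and `b11 : g₁ × g₁ → g₀`, subject to
the super-Jacobi identities. -/
structure SuperStructure (g0 g1 : Type*) [LieRing g0] [LieAlgebra ℂ g0]
    [AddCommGroup g1] [Module ℂ g1] where
  b01 : g0 →ₗ[ℂ] g1 →ₗ[ℂ] g1
  b11 : g1 →ₗ[ℂ] g1 →ₗ[ℂ] g0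
  symm11 : ∀ u v, b11 u v = b11 v u
  jacobi001 : ∀ x y v, b01 ⁅x, y⁆ v = b01 x (b01 y v) - b01 y (b01 x v)
  jacobi011 : ∀ x u v, ⁅x, b11 u v⁆ = b11 (b01 x u) v + b11 u (b01 x v)
  jacobi111 : ∀ u v w, b01 (b11 u v) w + b01 (b11 v w) u + b01 (b11 w u) v = 0

variable {g0 g1 : Type*} [LieRing g0] [LieAlgebra ℂ g0] [AddCommGroup g1] [Module ℂ g1]

/-- The subspace `[g₁, g₁] ⊆ g₀`. -/
def oddSquare (S : SuperStructure g0 g1) : Submodule ℂ g0 :=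
  Submodule.span ℂ (Set.range fun uv : g1 × g1 => S.b11 uv.1 uv.2)

namespace SuperStructure

variable (S : SuperStructure g0 g1)

theorem b01_b11 (u v : g1) :
    S.b01 (S.b11 u v) = -(S.b01.flip u ∘ₗ S.b11 v) - S.b01.flip v ∘ₗ S.b11 u := by
  ext w
  have hjac := S.jacobi111 u v w
  simp only [LinearMap.sub_apply, LinearMap.neg_apply, LinearMap.comp_apply,
    LinearMap.flip_apply, S.symm11 u w]
  linear_combination (norm := abel) hjac

theorem ad_b11 (u v : g1) :
    LieAlgebra.ad ℂ g0 (S.b11 u v) = -(S.b11 v ∘ₗ S.b01.flip u) - S.b11 u ∘ₗ S.b01.flip v := by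
  ext x
  rw [LieAlgebra.ad_apply, ← lie_skew, S.jacobi011]
  simp only [LinearMap.sub_apply, LinearMap.neg_apply, LinearMap.comp_apply,
    LinearMap.flip_apply, S.symm11 v (S.b01 x u)]
  abel

variable [FiniteDimensional ℂ g0] [FiniteDimensional ℂ g1]

theorem trace_b01_b11 (u v : g1) :
    LinearMap.trace ℂ g1 (S.b01 (S.b11 u v)) =
      LinearMap.trace ℂ g0 (LieAlgebra.ad ℂ g0 (S.b11 u v)) := by
  simp only [b01_b11, ad_b11, map_sub, map_neg, LinearMap.trace_comp_comm' (S.b01.flip u),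
    LinearMap.trace_comp_comm' (S.b01.flip v)]

theorem trace_b01_eq_trace_ad {h : g0} (hh : h ∈ oddSquare S) :
    LinearMap.trace ℂ g1 (S.b01 h) = LinearMap.trace ℂ g0 (LieAlgebra.ad ℂ g0 h) :=
  LinearMap.eqOn_span (f := LinearMap.trace ℂ g1 ∘ₗ S.b01)
    (g := LinearMap.trace ℂ g0 ∘ₗ (LieAlgebra.ad ℂ g0 : g0 →ₗ[ℂ] Module.End ℂ g0))
    (by rintro _ ⟨⟨u, v⟩, rfl⟩; exact S.trace_b01_b11 u v) hh

end SuperStructure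

theorem LieAlgebra.ad_eq_zero_of_mem_center {R L : Type*} [CommRing R] [LieRing L]
    [LieAlgebra R L] {H : L} (hH : H ∈ LieAlgebra.center R L) : LieAlgebra.ad R L H = 0 := by
  rw [← LieAlgebra.self_module_ker_eq_center, LieModule.mem_ker] at hH
  exact LinearMap.ext hH

theorem stmt6_general [FiniteDimensional ℂ g0] [FiniteDimensional ℂ g1]
    (S : SuperStructure g0 g1)
    (H : g0) (hH1 : H ∈ oddSquare S) (hH2 : H ∈ LieAlgebra.center ℂ g0) :
    LinearMap.trace ℂ g1 (S.b01 H) = 0 := by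
  rw [S.trace_b01_eq_trace_ad hH1, LieAlgebra.ad_eq_zero_of_mem_center hH2, map_zero]

/-- Let `g = g₀ ⊕ g₁` be a finite-dimensional classical Lie superalgebra over `ℂ` (the
adjoint action of `g₀` on `g₀` and on `g₁` is completely reducible).  For every
`H ∈ [g₁, g₁] ∩ z(g₀)`, the trace of `ad_H` acting on `g₁` is zero. -/
theorem stmt6 [FiniteDimensional ℂ g0] [FiniteDimensional ℂ g1]
    (S : SuperStructure g0 g1)
    (hcr0 : ∀ W : LieSubmodule ℂ g0 g0, ∃ W', IsCompl W W')
    (hcr1 : ∀ W : Submodule ℂ g1, (∀ (x : g0), ∀ v ∈ W, S.b01 x v ∈ W) →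
      ∃ W' : Submodule ℂ g1, (∀ (x : g0), ∀ v ∈ W', S.b01 x v ∈ W') ∧ IsCompl W W')
    (H : g0) (hH1 : H ∈ oddSquare S) (hH2 : H ∈ LieAlgebra.center ℂ g0) :
    LinearMap.trace ℂ g1 (S.b01 H) = 0 :=
  stmt6_general S H hH1 hH2
end

section
/- Let k be a finite-dimensional Lie superalgebra over ℂ, X ∈ k₀ an even element, and L a simple k-module. Then either X acts freely on L (i.e., L is a torsion-free module over the polynomial algebra ℂ[X] ⊆ U(k)), or X acts locally finitely on L (every vector of L is contained in a finite-dimensional X-invariant subspace). -/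
namespace Module.End

open Polynomial

variable {K L : Type*} [Field K] [AddCommGroup L] [Module K L] (A : Module.End K L)

def locallyFinitePart : Submodule K L where
  carrier := {v | ∃ W : Submodule K L, FiniteDimensional K W ∧ v ∈ W ∧ ∀ w ∈ W, A w ∈ W}
  zero_mem' := ⟨⊥, inferInstance, Submodule.zero_mem _, by simp⟩
  add_mem' := by
    rintro u v ⟨U, hU, hu, hAU⟩ ⟨V, hV, hv, hAV⟩
    refine ⟨U ⊔ V, inferInstance, Submodule.add_mem_sup hu hv, fun w hw => ?_⟩
    obtain ⟨y, hy, z, hz, rfl⟩ := Submodule.mem_sup.mp hw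
    rw [map_add]
    exact Submodule.add_mem_sup (hAU y hy) (hAV z hz)
  smul_mem' := by
    rintro c v ⟨W, hW, hv, hAW⟩
    exact ⟨W, hW, Submodule.smul_mem _ c hv, hAW⟩

variable {A}

theorem mem_locallyFinitePart {v : L} :
    v ∈ A.locallyFinitePart ↔
      ∃ W : Submodule K L, FiniteDimensional K W ∧ v ∈ W ∧ ∀ w ∈ W, A w ∈ W :=
  Iff.rfl

/-- The cyclic subspace `K[A] w` is spanned by the images of the polynomials of degree
`< deg p`, since `q(A) w = (q % p)(A) w`. -/
theorem mem_locallyFinitePart_of_aeval_eq_zero {p : K[X]} (hp : p ≠ 0) {w : L}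
    (hpw : aeval A p w = 0) : w ∈ A.locallyFinitePart := by
  let φ : K[X] →ₗ[K] L := (LinearMap.applyₗ w).comp (aeval A).toLinearMap
  have hφ : ∀ q, φ q = aeval A q w := fun _ => rfl
  let W := (degreeLT K p.natDegree).map φ
  have hW : ∀ q, φ q ∈ W := by
    intro q
    have hmod : φ q = φ (q % p) := by
      conv_lhs => rw [← EuclideanDomain.mod_add_div' q p]
      simp [hφ, hpw]
    rw [hmod]
    refine Submodule.mem_map_of_mem (mem_degreeLT.mpr ?_)
    rw [← degree_eq_natDegree hp]
    exact degree_mod_lt q hp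
  have : FiniteDimensional K (degreeLT K p.natDegree) :=
    LinearEquiv.finiteDimensional (degreeLTEquiv K p.natDegree).symm
  refine ⟨W, inferInstance, by simpa [hφ] using hW 1, ?_⟩
  rintro _ ⟨q, -, rfl⟩
  have := hW (X * q)
  rwa [hφ, map_mul, aeval_X, Module.End.mul_apply] at this

/-- `A (T w) = T (A w) + ⁅A, T⁆ w`, so `W + E W` is `A`-invariant whenever `W` is. -/
theorem apply_mem_locallyFinitePart {E : Submodule K (Module.End K L)} [FiniteDimensional K E]
    (hAE : ∀ T ∈ E, ⁅A, T⁆ ∈ E) {T : Module.End K L} (hT : T ∈ E) {v : L}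
    (hv : v ∈ A.locallyFinitePart) : T v ∈ A.locallyFinitePart := by
  obtain ⟨W, hW, hvW, hAW⟩ := hv
  let EW := Submodule.map₂ LinearMap.id E W
  have hEW : FiniteDimensional K EW := by
    rw [← Submodule.fg_iff_finiteDimensional] at hW ⊢
    exact (E.fg_iff_finiteDimensional.mpr ‹_›).map₂ _ hW
  have hAEW : ∀ S ∈ E, ∀ w ∈ W, A (S w) ∈ EW := fun S hS w hw => by
    have : A (S w) = S (A w) + ⁅A, S⁆ w := by simp [Ring.lie_def]
    rw [this]
    exact add_mem (Submodule.apply_mem_map₂ _ hS (hAW w hw))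
      (Submodule.apply_mem_map₂ _ (hAE S hS) hw)
  refine ⟨W ⊔ EW, inferInstance, Submodule.mem_sup_right (Submodule.apply_mem_map₂ _ hT hvW), ?_⟩
  suffices W ⊔ EW ≤ (W ⊔ EW).comap A from fun w hw => this hw
  refine sup_le (fun w hw => Submodule.mem_sup_left (hAW w hw)) ?_
  exact Submodule.map₂_le.mpr fun S hS w hw => Submodule.mem_sup_right (hAEW S hS w hw)

end Module.End

open Module.End in
theorem stmt8_general {g0 g1 L : Type*} [LieRing g0] [LieAlgebra ℂ g0]
    [AddCommGroup g1] [Module ℂ g1] [AddCommGroup L] [Module ℂ L]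
    [FiniteDimensional ℂ g0] [FiniteDimensional ℂ g1]
    (S : SuperStructure g0 g1)
    (ρ0 : g0 →ₗ[ℂ] Module.End ℂ L) (ρ1 : g1 →ₗ[ℂ] Module.End ℂ L)
    (hrep0 : ∀ x y, ρ0 ⁅x, y⁆ = ρ0 x * ρ0 y - ρ0 y * ρ0 x)
    (hrep01 : ∀ x u, ρ1 (S.b01 x u) = ρ0 x * ρ1 u - ρ1 u * ρ0 x)
    (hsimple : ∀ W : Submodule ℂ L,
      (∀ (x : g0), ∀ w ∈ W, ρ0 x w ∈ W) → (∀ (u : g1), ∀ w ∈ W, ρ1 u w ∈ W) →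
        W = ⊥ ∨ W = ⊤)
    (X : g0) :
    (∀ p : Polynomial ℂ, p ≠ 0 → ∀ w : L, w ≠ 0 → Polynomial.aeval (ρ0 X) p w ≠ 0) ∨
    (∀ v : L, ∃ W : Submodule ℂ L, FiniteDimensional ℂ W ∧ v ∈ W ∧
      ∀ w ∈ W, ρ0 X w ∈ W) := by
  refine or_iff_not_imp_left.mpr fun hfree => ?_
  push Not at hfree
  obtain ⟨p, hp, w, hw, hpw⟩ := hfree
  have hinv0 : ∀ x, ∀ v ∈ (ρ0 X).locallyFinitePart, ρ0 x v ∈ (ρ0 X).locallyFinitePart := by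
    refine fun x v => apply_mem_locallyFinitePart ?_ (LinearMap.mem_range_self ρ0 x)
    rintro _ ⟨y, rfl⟩
    exact ⟨⁅X, y⁆, by rw [hrep0, Ring.lie_def]⟩
  have hinv1 : ∀ u, ∀ v ∈ (ρ0 X).locallyFinitePart, ρ1 u v ∈ (ρ0 X).locallyFinitePart := by
    refine fun u v => apply_mem_locallyFinitePart ?_ (LinearMap.mem_range_self ρ1 u)
    rintro _ ⟨y, rfl⟩
    exact ⟨S.b01 X y, by rw [hrep01, Ring.lie_def]⟩
  rcases hsimple _ hinv0 hinv1 with hbot | htop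
  · have hwmem := mem_locallyFinitePart_of_aeval_eq_zero hp hpw
    rw [hbot, Submodule.mem_bot] at hwmem
    exact absurd hwmem hw
  · exact fun v => mem_locallyFinitePart.mp (htop ▸ Submodule.mem_top)

/-- Let `k` be a finite-dimensional Lie superalgebra over `ℂ`, `X ∈ k₀`, and `L` a simple
`k`-module.  Then either `X` acts freely on `L` (i.e. `L` is torsion-free over `ℂ[X]`), or
`X` acts locally finitely on `L`. -/
theorem stmt8 {g0 g1 L : Type*} [LieRing g0] [LieAlgebra ℂ g0]
    [AddCommGroup g1] [Module ℂ g1] [AddCommGroup L] [Module ℂ L]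
    [FiniteDimensional ℂ g0] [FiniteDimensional ℂ g1] [Nontrivial L]
    (S : SuperStructure g0 g1)
    (ρ0 : g0 →ₗ[ℂ] Module.End ℂ L) (ρ1 : g1 →ₗ[ℂ] Module.End ℂ L)
    (hrep0 : ∀ x y, ρ0 ⁅x, y⁆ = ρ0 x * ρ0 y - ρ0 y * ρ0 x)
    (hrep01 : ∀ x u, ρ1 (S.b01 x u) = ρ0 x * ρ1 u - ρ1 u * ρ0 x)
    (hrep11 : ∀ u v, ρ0 (S.b11 u v) = ρ1 u * ρ1 v + ρ1 v * ρ1 u)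
    (hsimple : ∀ W : Submodule ℂ L,
      (∀ (x : g0), ∀ w ∈ W, ρ0 x w ∈ W) → (∀ (u : g1), ∀ w ∈ W, ρ1 u w ∈ W) →
        W = ⊥ ∨ W = ⊤)
    (X : g0) :
    (∀ p : Polynomial ℂ, p ≠ 0 → ∀ w : L, w ≠ 0 → Polynomial.aeval (ρ0 X) p w ≠ 0) ∨
    (∀ v : L, ∃ W : Submodule ℂ L, FiniteDimensional ℂ W ∧ v ∈ W ∧
      ∀ w ∈ W, ρ0 X w ∈ W) :=
  stmt8_general S ρ0 ρ1 hrep0 hrep01 hsimple X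
end

section
/- For a bipartition x = (μ, ν) in BRP^{00}_n with p = ℓ(μ), the Borel subalgebra b(ζ_x) of the periplectic Lie superalgebra pe(n) has odd part of dimension n(n−1)/2 + p. -/
/-- The basis vector `ε_i` (1-indexed) of the weight lattice, as a function `ℕ → ℤ`. -/
def eps (i : ℕ) : ℕ → ℤ := fun k => if k = i then 1 else 0

/-- The odd roots of `pe(n)`:
`{ε_i + ε_j : 1 ≤ i ≤ j ≤ n} ∪ {-ε_i - ε_j : 1 ≤ i < j ≤ n}`. -/
def OddRoots (n : ℕ) : Set (ℕ → ℤ) :=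
  {α | ∃ i j, 1 ≤ i ∧ i ≤ j ∧ j ≤ n ∧ α = eps i + eps j} ∪
  {α | ∃ i j, 1 ≤ i ∧ i < j ∧ j ≤ n ∧ α = -eps i - eps j}

/-- The standard bilinear form `(ζ, α) = Σ_{k=1}^n ζ_k α_k`. -/
def pairing (n : ℕ) (ζ α : ℕ → ℤ) : ℤ := ∑ k ∈ Finset.Icc 1 n, ζ k * α k

/-- The weight `ζ_x = Σ_i μ_i ε_i − Σ_j ν_j ε_{n+1−j}` attached to a bipartition
`x = (μ, ν)` with `ℓ(μ) = p` (partitions given as 1-indexed sequences of parts). -/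
def zetaWt (n p : ℕ) (μ ν : ℕ → ℕ) : ℕ → ℤ :=
  fun k => if k ≤ p then (μ k : ℤ) else -(ν (n + 1 - k) : ℤ)

/-!
For `i < j` exactly one of `ε_i + ε_j` and `-ε_i - ε_j` pairs positively with `ζ_x`, unless
`ζ_i + ζ_j = 0`; and `2ε_i` pairs positively exactly when `ζ_i > 0`, i.e. for the `p` indices
`i ≤ ℓ(μ)`. The sum `ζ_i + ζ_j` never vanishes: for `i ≤ p < j` it is `μ_i - ν_{n+1-j}`, and the
parts of `μ` and `ν` are distinct because together they are the distinct numbers `1, …, n`.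
-/

open Finset

lemma eq_or_eq_of_eps_add_eps_eq {i j a b : ℕ} (h : eps i + eps j = eps a + eps b) :
    i = a ∨ i = b := by
  have hi := congrFun h i
  simp only [Pi.add_apply, eps] at hi
  split_ifs at hi <;> omega

lemma eps_add_eps_inj {i j a b : ℕ} (hij : i ≤ j) (hab : a ≤ b)
    (h : eps i + eps j = eps a + eps b) : i = a ∧ j = b := by
  have hi := eq_or_eq_of_eps_add_eps_eq h
  have hj := eq_or_eq_of_eps_add_eps_eq ((add_comm _ _).trans h)
  have ha := eq_or_eq_of_eps_add_eps_eq h.symm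
  have hb := eq_or_eq_of_eps_add_eps_eq ((add_comm _ _).trans h.symm)
  omega

lemma eps_add_eps_ne_neg_eps_sub_eps (i j a b : ℕ) : eps i + eps j ≠ -eps a - eps b := by
  intro h
  have hi := congrFun h i
  simp only [Pi.add_apply, Pi.sub_apply, Pi.neg_apply, eps] at hi
  split_ifs at hi <;> omega

section Pairing

variable (n : ℕ) (ζ : ℕ → ℤ)

lemma pairing_add (α β : ℕ → ℤ) : pairing n ζ (α + β) = pairing n ζ α + pairing n ζ β := by
  simp only [pairing, Pi.add_apply, mul_add, sum_add_distrib]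

lemma pairing_neg (α : ℕ → ℤ) : pairing n ζ (-α) = -pairing n ζ α := by
  simp only [pairing, Pi.neg_apply, mul_neg, sum_neg_distrib]

lemma pairing_eps {i : ℕ} (hi : i ∈ Icc 1 n) : pairing n ζ (eps i) = ζ i := by
  simp [pairing, eps, hi]

lemma pairing_eps_add_eps {i j : ℕ} (hi : i ∈ Icc 1 n) (hj : j ∈ Icc 1 n) :
    pairing n ζ (eps i + eps j) = ζ i + ζ j := by
  rw [pairing_add, pairing_eps n ζ hi, pairing_eps n ζ hj]

lemma pairing_neg_eps_sub_eps {i j : ℕ} (hi : i ∈ Icc 1 n) (hj : j ∈ Icc 1 n) :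
    pairing n ζ (-eps i - eps j) = -(ζ i + ζ j) := by
  rw [← neg_add', pairing_neg, pairing_eps_add_eps n ζ hi hj]

end Pairing

/-- The pairs `(i, j)` indexing the odd roots `ε_i + ε_j` that are positive on `ζ`. -/
def posRootPairs (n : ℕ) (ζ : ℕ → ℤ) : Finset (ℕ × ℕ) :=
  (Icc 1 n ×ˢ Icc 1 n).filter fun ij => ij.1 ≤ ij.2 ∧ 0 < ζ ij.1 + ζ ij.2

/-- The pairs `(i, j)` indexing the odd roots `-ε_i - ε_j` that are positive on `ζ`. -/
def negRootPairs (n : ℕ) (ζ : ℕ → ℤ) : Finset (ℕ × ℕ) :=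
  (Icc 1 n ×ˢ Icc 1 n).filter fun ij => ij.1 < ij.2 ∧ ζ ij.1 + ζ ij.2 < 0

lemma card_filter_lt_Icc_product (n : ℕ) :
    #{ij ∈ Icc 1 n ×ˢ Icc 1 n | ij.1 < ij.2} = n * (n - 1) / 2 := by
  rw [card_filter, sum_product, ← sum_range_id]
  refine sum_nbij' (fun i => n - i) (fun k => n - k) ?_ ?_ ?_ ?_ fun i _ => ?_
  any_goals
    intro k hk
    simp only [mem_Icc, mem_range] at hk ⊢
    omega
  have hIoc : {j ∈ Icc 1 n | i < j} = Ioc i n := by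
    ext j
    simp only [mem_filter, mem_Icc, mem_Ioc]
    omega
  rw [← card_filter, hIoc, Nat.card_Ioc]

section Counting

variable {n : ℕ} {ζ : ℕ → ℤ}

lemma setOf_oddRoots_pairing_pos :
    {α | α ∈ OddRoots n ∧ 0 < pairing n ζ α} =
      (fun ij : ℕ × ℕ => eps ij.1 + eps ij.2) '' posRootPairs n ζ ∪
        (fun ij : ℕ × ℕ => -eps ij.1 - eps ij.2) '' negRootPairs n ζ := by
  ext α
  simp only [OddRoots, posRootPairs, negRootPairs, Set.mem_ofPred_eq, Set.mem_union,
    Set.mem_image, coe_filter, mem_product, mem_Icc, Prod.exists]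
  constructor
  · rintro ⟨⟨i, j, hi, hij, hj, rfl⟩ | ⟨i, j, hi, hij, hj, rfl⟩, hpos⟩
    · rw [pairing_eps_add_eps n ζ (mem_Icc.2 ⟨hi, by omega⟩) (mem_Icc.2 ⟨by omega, hj⟩)] at hpos
      exact Or.inl ⟨i, j, ⟨⟨⟨hi, by omega⟩, by omega, hj⟩, hij, hpos⟩, rfl⟩
    · rw [pairing_neg_eps_sub_eps n ζ (mem_Icc.2 ⟨hi, by omega⟩)
        (mem_Icc.2 ⟨by omega, hj⟩)] at hpos
      exact Or.inr ⟨i, j, ⟨⟨⟨hi, by omega⟩, by omega, hj⟩, hij, by omega⟩, rfl⟩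
  · rintro (⟨i, j, ⟨⟨hi, hj⟩, hij, hpos⟩, rfl⟩ | ⟨i, j, ⟨⟨hi, hj⟩, hij, hneg⟩, rfl⟩)
    · refine ⟨Or.inl ⟨i, j, hi.1, hij, hj.2, rfl⟩, ?_⟩
      rwa [pairing_eps_add_eps n ζ (mem_Icc.2 hi) (mem_Icc.2 hj)]
    · refine ⟨Or.inr ⟨i, j, hi.1, hij, hj.2, rfl⟩, ?_⟩
      rw [pairing_neg_eps_sub_eps n ζ (mem_Icc.2 hi) (mem_Icc.2 hj)]
      omega

lemma ncard_setOf_oddRoots_pairing_pos :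
    Set.ncard {α | α ∈ OddRoots n ∧ 0 < pairing n ζ α} =
      #(posRootPairs n ζ) + #(negRootPairs n ζ) := by
  rw [setOf_oddRoots_pairing_pos, Set.ncard_union_eq, Set.InjOn.ncard_image,
    Set.InjOn.ncard_image, Set.ncard_coe_finset, Set.ncard_coe_finset]
  · rintro ⟨i, j⟩ hij ⟨a, b⟩ hab h
    simp only [negRootPairs, coe_filter] at hij hab
    have h' : eps i + eps j = eps a + eps b := by simpa only [← neg_add', neg_inj] using h
    obtain ⟨rfl, rfl⟩ := eps_add_eps_inj hij.2.1.le hab.2.1.le h'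
    rfl
  · rintro ⟨i, j⟩ hij ⟨a, b⟩ hab h
    simp only [posRootPairs, coe_filter] at hij hab
    obtain ⟨rfl, rfl⟩ := eps_add_eps_inj hij.2.1 hab.2.1 h
    rfl
  · rw [Set.disjoint_left]
    rintro _ ⟨⟨i, j⟩, -, rfl⟩ ⟨⟨a, b⟩, -, h⟩
    exact eps_add_eps_ne_neg_eps_sub_eps i j a b h.symm

lemma card_posRootPairs_add_card_negRootPairs
    (hreg : ∀ i ∈ Icc 1 n, ∀ j ∈ Icc 1 n, ζ i + ζ j ≠ 0) :
    #(posRootPairs n ζ) + #(negRootPairs n ζ) =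
      n * (n - 1) / 2 + #{i ∈ Icc 1 n | 0 < ζ i} := by
  have hsplit : ∀ ij ∈ Icc 1 n ×ˢ Icc 1 n,
      ((if ij.1 ≤ ij.2 ∧ 0 < ζ ij.1 + ζ ij.2 then 1 else 0) +
        if ij.1 < ij.2 ∧ ζ ij.1 + ζ ij.2 < 0 then 1 else 0) =
      (if ij.1 < ij.2 then 1 else 0) + if ij.1 = ij.2 ∧ 0 < ζ ij.1 then 1 else 0 := by
    rintro ⟨i, j⟩ hij
    rw [mem_product] at hij
    have := hreg i hij.1 j hij.2
    dsimp only
    rcases eq_or_ne i j with rfl | hne <;> split_ifs <;> omega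
  have hdiag : {ij ∈ Icc 1 n ×ˢ Icc 1 n | ij.1 = ij.2 ∧ 0 < ζ ij.1} =
      {i ∈ Icc 1 n | 0 < ζ i}.diag := by
    ext ⟨i, j⟩
    simp only [mem_filter, mem_product, mem_diag]
    constructor
    · rintro ⟨⟨hi, -⟩, rfl, hpos⟩
      exact ⟨⟨hi, hpos⟩, rfl⟩
    · rintro ⟨⟨hi, hpos⟩, rfl⟩
      exact ⟨⟨hi, hi⟩, rfl, hpos⟩
  rw [posRootPairs, negRootPairs, card_filter, card_filter, ← sum_add_distrib,
    sum_congr rfl hsplit, sum_add_distrib, ← card_filter, ← card_filter,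
    card_filter_lt_Icc_product, hdiag, diag_card]

end Counting

section SignPattern

variable {n p : ℕ} {ζ : ℕ → ℤ}

lemma add_ne_zero_of_sign_pattern (hpos : ∀ i ∈ Icc 1 p, 0 < ζ i)
    (hneg : ∀ j ∈ Ioc p n, ζ j < 0) (hcross : ∀ i ∈ Icc 1 p, ∀ j ∈ Ioc p n, ζ i + ζ j ≠ 0) :
    ∀ i ∈ Icc 1 n, ∀ j ∈ Icc 1 n, ζ i + ζ j ≠ 0 := by
  have hpos' : ∀ i ∈ Icc 1 n, i ≤ p → 0 < ζ i := fun i hi hip =>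
    hpos i (mem_Icc.2 ⟨(mem_Icc.1 hi).1, hip⟩)
  have hneg' : ∀ j ∈ Icc 1 n, p < j → ζ j < 0 := fun j hj hpj =>
    hneg j (mem_Ioc.2 ⟨hpj, (mem_Icc.1 hj).2⟩)
  intro i hi j hj
  rcases le_or_gt i p with hip | hpi <;> rcases le_or_gt j p with hjp | hpj
  · linarith [hpos' i hi hip, hpos' j hj hjp]
  · exact hcross i (mem_Icc.2 ⟨(mem_Icc.1 hi).1, hip⟩) j (mem_Ioc.2 ⟨hpj, (mem_Icc.1 hj).2⟩)
  · rw [add_comm]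
    exact hcross j (mem_Icc.2 ⟨(mem_Icc.1 hj).1, hjp⟩) i (mem_Ioc.2 ⟨hpi, (mem_Icc.1 hi).2⟩)
  · linarith [hneg' i hi hpi, hneg' j hj hpj]

lemma card_filter_pos_of_sign_pattern (hpn : p ≤ n) (hpos : ∀ i ∈ Icc 1 p, 0 < ζ i)
    (hneg : ∀ j ∈ Ioc p n, ζ j < 0) : #{i ∈ Icc 1 n | 0 < ζ i} = p := by
  have : {i ∈ Icc 1 n | 0 < ζ i} = Icc 1 p := by
    ext i
    simp only [mem_filter, mem_Icc]
    constructor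
    · rintro ⟨⟨hi, hin⟩, hζ⟩
      refine ⟨hi, not_lt.1 fun hpi => ?_⟩
      linarith [hneg i (mem_Ioc.2 ⟨hpi, hin⟩)]
    · rintro ⟨hi, hip⟩
      exact ⟨⟨hi, hip.trans hpn⟩, hpos i (mem_Icc.2 ⟨hi, hip⟩)⟩
  rw [this, Nat.card_Icc, Nat.add_sub_cancel]

end SignPattern

lemma map_ne_of_nodup_map_add_map {α β : Type*} {s t : Multiset α} {f g : α → β}
    (h : (s.map f + t.map g).Nodup) {a b : α} (ha : a ∈ s) (hb : b ∈ t) : f a ≠ g b :=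
  fun hab => Multiset.disjoint_left.1 (Multiset.disjoint_of_nodup_add h)
    (Multiset.mem_map_of_mem f ha) (hab ▸ Multiset.mem_map_of_mem g hb)

section ZetaWt

variable {n p q : ℕ} {μ ν : ℕ → ℕ}

lemma zetaWt_pos (hμpos : ∀ i, 1 ≤ i → i ≤ p → 0 < μ i) :
    ∀ i ∈ Icc 1 p, 0 < zetaWt n p μ ν i := by
  intro i hi
  obtain ⟨hi1, hip⟩ := mem_Icc.1 hi
  simp only [zetaWt, if_pos hip]
  exact_mod_cast hμpos i hi1 hip

lemma zetaWt_neg (hpq : p + q = n) (hνpos : ∀ j, 1 ≤ j → j ≤ q → 0 < ν j) :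
    ∀ j ∈ Ioc p n, zetaWt n p μ ν j < 0 := by
  intro j hj
  obtain ⟨hpj, hjn⟩ := mem_Ioc.1 hj
  simp only [zetaWt, if_neg (not_le.2 hpj), Left.neg_neg_iff, Nat.cast_pos]
  exact hνpos _ (by omega) (by omega)

lemma zetaWt_add_ne_zero (hpq : p + q = n)
    (hstair : ((Icc 1 p).val.map μ) + ((Icc 1 q).val.map ν) = (Icc 1 n).val) :
    ∀ i ∈ Icc 1 p, ∀ j ∈ Ioc p n, zetaWt n p μ ν i + zetaWt n p μ ν j ≠ 0 := by
  intro i hi j hj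
  obtain ⟨hpj, hjn⟩ := mem_Ioc.1 hj
  have hne : μ i ≠ ν (n + 1 - j) :=
    map_ne_of_nodup_map_add_map (hstair ▸ (Icc 1 n).nodup) hi (mem_Icc.2 ⟨by omega, by omega⟩)
  simp only [zetaWt, if_pos (mem_Icc.1 hi).2, if_neg (not_le.2 hpj)]
  omega

end ZetaWt

theorem stmt9_general (n p q : ℕ) (hpq : p + q = n) (μ ν : ℕ → ℕ)
    (hμpos : ∀ i, 1 ≤ i → i ≤ p → 0 < μ i)
    (hνpos : ∀ j, 1 ≤ j → j ≤ q → 0 < ν j)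
    (hstair : ((Finset.Icc 1 p).val.map μ) + ((Finset.Icc 1 q).val.map ν)
      = (Finset.Icc 1 n).val) :
    Set.ncard {α | α ∈ OddRoots n ∧ 0 < pairing n (zetaWt n p μ ν) α}
      = n * (n - 1) / 2 + p := by
  have hpos := zetaWt_pos (n := n) (ν := ν) hμpos
  have hneg := zetaWt_neg (μ := μ) hpq hνpos
  rw [ncard_setOf_oddRoots_pairing_pos, card_posRootPairs_add_card_negRootPairs
      (add_ne_zero_of_sign_pattern hpos hneg (zetaWt_add_ne_zero hpq hstair)),
    card_filter_pos_of_sign_pattern (by omega) hpos hneg]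

/-- For a bipartition `x = (μ, ν) ∈ BRP⁰⁰ₙ` (i.e. the parts of `μ` and `ν` together are
exactly `n, n-1, …, 1`) with `p = ℓ(μ)`, the Borel subalgebra `b(ζ_x)` of `pe(n)` has odd
part of dimension `n(n−1)/2 + p`, i.e. the number of odd roots `α` with `(ζ_x, α) > 0` is
`n(n−1)/2 + p`. -/
theorem stmt9 (n p q : ℕ) (hpq : p + q = n) (μ ν : ℕ → ℕ)
    (hμpos : ∀ i, 1 ≤ i → i ≤ p → 0 < μ i) (hμ0 : ∀ i, p < i → μ i = 0)
    (hμdec : ∀ i, 1 ≤ i → μ (i + 1) ≤ μ i)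
    (hνpos : ∀ j, 1 ≤ j → j ≤ q → 0 < ν j) (hν0 : ∀ j, q < j → ν j = 0)
    (hνdec : ∀ j, 1 ≤ j → ν (j + 1) ≤ ν j)
    (hstair : ((Finset.Icc 1 p).val.map μ) + ((Finset.Icc 1 q).val.map ν)
      = (Finset.Icc 1 n).val) :
    Set.ncard {α | α ∈ OddRoots n ∧ 0 < pairing n (zetaWt n p μ ν) α}
      = n * (n - 1) / 2 + p :=
  stmt9_general n p q hpq μ ν hμpos hνpos hstair
end

section
/- Let δ ∈ ℝ^n satisfy: all nonzero values among {|δ_i − δ_j|, |δ_i + δ_j| : 1 ≤ i, j ≤ n} are ≥ 2. Define γ ∈ ℤ^n by γ_i = ⌈δ_i⌉ if δ_i > 0, γ_i = 0 if δ_i = 0, and γ_i = ⌊δ_i⌋ if δ_i < 0. Then for all i, j, the sign of γ_i − γ_j equals the sign of δ_i − δ_j and the sign of γ_i + γ_j equals the sign of δ_i + δ_j. -/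
/-!
Rounding away from zero moves each coordinate by less than `1` and commutes with negation.
Hence `γ_i ∓ γ_j` differs from `δ_i ∓ δ_j` by less than `2`, which cannot change the sign of a
nonzero value of absolute value at least `2`; and `δ_i ∓ δ_j = 0` means `δ_j = ±δ_i`, so then
`γ_j = ±γ_i` as well.
-/

noncomputable def roundOut (x : ℝ) : ℤ :=
  if 0 < x then ⌈x⌉ else if x = 0 then 0 else ⌊x⌋

lemma roundOut_neg (x : ℝ) : roundOut (-x) = -roundOut x := by
  unfold roundOut
  rcases lt_trichotomy x 0 with hx | rfl | hx
  · rw [if_pos (neg_pos.2 hx), if_neg (not_lt.2 hx.le), if_neg hx.ne, Int.ceil_neg]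
  · simp
  · rw [if_neg (by linarith), if_neg (by linarith), if_pos hx, Int.floor_neg]

lemma abs_roundOut_sub_lt_one (x : ℝ) : |(roundOut x : ℝ) - x| < 1 := by
  unfold roundOut
  rcases lt_trichotomy x 0 with hx | rfl | hx
  · rw [if_neg (not_lt.2 hx.le), if_neg hx.ne, abs_sub_lt_iff]
    constructor <;> linarith [Int.floor_le x, Int.sub_one_lt_floor x]
  · simp
  · rw [if_pos hx, abs_sub_lt_iff]
    constructor <;> linarith [Int.le_ceil x, Int.ceil_lt_add_one x]

lemma Real.sign_eq_sign_of_abs_sub_lt_abs {a b : ℝ} (h : |a - b| < |b|) :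
    Real.sign a = Real.sign b := by
  have hb : b ≠ 0 := by
    rintro rfl
    exact (abs_nonneg _).not_gt (by simpa using h)
  rcases hb.lt_or_gt with hneg | hpos
  · rw [abs_of_neg hneg] at h
    rw [Real.sign_of_neg hneg, Real.sign_of_neg (by linarith [le_abs_self (a - b)])]
  · rw [abs_of_pos hpos] at h
    rw [Real.sign_of_pos hpos, Real.sign_of_pos (by linarith [neg_abs_le (a - b)])]

lemma Real.sign_eq_sign_of_abs_sub_lt_two {a b : ℝ} (hab : |a - b| < 2) (ha : b = 0 → a = 0)
    (hb : b ≠ 0 → 2 ≤ |b|) : Real.sign a = Real.sign b := by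
  rcases eq_or_ne b 0 with rfl | hb0
  · rw [ha rfl]
  · exact Real.sign_eq_sign_of_abs_sub_lt_abs (hab.trans_le (hb hb0))

lemma abs_roundOut_sub_roundOut_sub_lt_two (x y : ℝ) :
    |((roundOut x : ℝ) - roundOut y) - (x - y)| < 2 := by
  calc |((roundOut x : ℝ) - roundOut y) - (x - y)|
      = |((roundOut x : ℝ) - x) - ((roundOut y : ℝ) - y)| := by ring_nf
    _ ≤ |(roundOut x : ℝ) - x| + |(roundOut y : ℝ) - y| := abs_sub _ _
    _ < 2 := by linarith [abs_roundOut_sub_lt_one x, abs_roundOut_sub_lt_one y]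

lemma abs_roundOut_add_roundOut_sub_lt_two (x y : ℝ) :
    |((roundOut x : ℝ) + roundOut y) - (x + y)| < 2 := by
  calc |((roundOut x : ℝ) + roundOut y) - (x + y)|
      = |((roundOut x : ℝ) - x) + ((roundOut y : ℝ) - y)| := by ring_nf
    _ ≤ |(roundOut x : ℝ) - x| + |(roundOut y : ℝ) - y| := abs_add_le _ _
    _ < 2 := by linarith [abs_roundOut_sub_lt_one x, abs_roundOut_sub_lt_one y]

/-- Let `δ ∈ ℝⁿ` be such that every nonzero value among `|δ_i − δ_j|`, `|δ_i + δ_j|` is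
`≥ 2`, and define `γ ∈ ℤⁿ` by `γ_i = ⌈δ_i⌉` if `δ_i > 0`, `γ_i = 0` if `δ_i = 0`, and
`γ_i = ⌊δ_i⌋` if `δ_i < 0`.  Then for all `i, j` the sign of `γ_i − γ_j` equals the sign
of `δ_i − δ_j` and the sign of `γ_i + γ_j` equals the sign of `δ_i + δ_j`. -/
theorem stmt14 (n : ℕ) (δ : Fin n → ℝ)
    (h : ∀ i j : Fin n, (δ i - δ j ≠ 0 → 2 ≤ |δ i - δ j|) ∧
      (δ i + δ j ≠ 0 → 2 ≤ |δ i + δ j|)) :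
    ∀ i j : Fin n,
      Real.sign ((roundOut (δ i) : ℝ) - (roundOut (δ j) : ℝ)) = Real.sign (δ i - δ j) ∧
      Real.sign ((roundOut (δ i) : ℝ) + (roundOut (δ j) : ℝ)) = Real.sign (δ i + δ j) := by
  intro i j
  constructor
  · refine Real.sign_eq_sign_of_abs_sub_lt_two (abs_roundOut_sub_roundOut_sub_lt_two _ _)
      (fun hdiff => ?_) (h i j).1
    rw [sub_eq_zero.1 hdiff, sub_self]
  · refine Real.sign_eq_sign_of_abs_sub_lt_two (abs_roundOut_add_roundOut_sub_lt_two _ _)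
      (fun hsum => ?_) (h i j).2
    rw [eq_neg_of_add_eq_zero_right hsum, roundOut_neg, Int.cast_neg, add_neg_cancel]
end
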